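/- The subspace h = span_ℂ{H_1, …, H_l} is an l-dimensional abelian Lie subalgebra of g_{D_l} which is self-normalizing in g_{D_l} (hence a Cartan subalgebra of g_{D_l}), and h is likewise self-normalizing in g_{B_l}, hence a Cartan subalgebra of g_{B_l}. -/

import Mathlib

noncomputable section

open CliffordAlgebra

/-- The `2l`-dimensional complex vector space `A` with basis `a_1, …, a_l, a_1^*, …, a_l^*`,
realized as pairs of coordinate vectors. -/
abbrev Avec (l : ℕ) : Type := (Fin l → ℂ) × (Fin l → ℂ)

/-- The bilinear form `F(u, v) = ∑ u.1 i * v.2 i` on `Avec l`. -/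
def Bform (l : ℕ) : LinearMap.BilinForm ℂ (Avec l) :=
  LinearMap.mk₂ ℂ (fun u v => ∑ i, u.1 i * v.2 i)
    (fun u u' v => by simp [add_mul, Finset.sum_add_distrib])
    (fun c u v => by simp [Finset.mul_sum, mul_assoc])
    (fun u v v' => by simp [mul_add, Finset.sum_add_distrib])
    (fun c u v => by simp [Finset.mul_sum, mul_left_comm])

/-- The quadratic form `Q(∑ x_i a_i + ∑ y_i a_i^*) = ∑ x_i y_i` on `Avec l`. -/
def Qform (l : ℕ) : QuadraticForm ℂ (Avec l) := (Bform l).toQuadraticMap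

/-- The basis vector `a_i`. -/
def av (l : ℕ) (i : Fin l) : Avec l := (Pi.single i 1, 0)

/-- The basis vector `a_i^*`. -/
def avs (l : ℕ) (i : Fin l) : Avec l := (0, Pi.single i 1)

/-- The normally ordered product `:xy: = (1/2)(ι(x)ι(y) − ι(y)ι(x))` in the Clifford algebra. -/
def nor (l : ℕ) (x y : Avec l) : CliffordAlgebra (Qform l) :=
  (2⁻¹ : ℂ) • (ι (Qform l) x * ι (Qform l) y - ι (Qform l) y * ι (Qform l) x)

/-- `g_{D_l} = span_ℂ{ :xy: : x, y ∈ A }`. -/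
def gD (l : ℕ) : Submodule ℂ (CliffordAlgebra (Qform l)) :=
  Submodule.span ℂ {z | ∃ x y : Avec l, z = nor l x y}

/-- `g_{B_l} = g_{D_l} + ι(A)`. -/
def gB (l : ℕ) : Submodule ℂ (CliffordAlgebra (Qform l)) :=
  gD l ⊔ LinearMap.range (ι (Qform l))

/-- `H_i = :a_i a_i^*:`. -/
def Hc (l : ℕ) (i : Fin l) : CliffordAlgebra (Qform l) := nor l (av l i) (avs l i)

/-- `e_{ε_i−ε_j} = :a_i a_j^*:`. -/
def eM (l : ℕ) (i j : Fin l) : CliffordAlgebra (Qform l) := nor l (av l i) (avs l j)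

/-- `e_{ε_i+ε_j} = :a_i a_j:`. -/
def eP (l : ℕ) (i j : Fin l) : CliffordAlgebra (Qform l) := nor l (av l i) (av l j)

/-- `f_{ε_i−ε_j} = :a_j a_i^*:`. -/
def fM (l : ℕ) (i j : Fin l) : CliffordAlgebra (Qform l) := nor l (av l j) (avs l i)

/-- `f_{ε_i+ε_j} = :a_j^* a_i^*:`. -/
def fP (l : ℕ) (i j : Fin l) : CliffordAlgebra (Qform l) := nor l (avs l j) (avs l i)



namespace CartanAux

variable {l : ℕ}

/-- polar form values -/
lemma polar_eq (u v : Avec l) :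
    QuadraticMap.polar (Qform l) u v = ∑ i, (u.1 i * v.2 i + v.1 i * u.2 i) := by
  rw [Qform, LinearMap.BilinMap.polar_toQuadraticMap]
  simp [Bform, Finset.sum_add_distrib]

lemma polar_av_av (i j : Fin l) : QuadraticMap.polar (Qform l) (av l i) (av l j) = 0 := by
  simp [polar_eq, av]

lemma polar_avs_avs (i j : Fin l) : QuadraticMap.polar (Qform l) (avs l i) (avs l j) = 0 := by
  simp [polar_eq, avs]

lemma polar_av_avs (i j : Fin l) :
    QuadraticMap.polar (Qform l) (av l i) (avs l j) = if i = j then 1 else 0 := by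
  by_cases h : i = j
  · subst h; simp [polar_eq, av, avs, Pi.single_apply]
  · simp [polar_eq, av, avs, Pi.single_apply, h]
    intro hx; exact h hx.symm

lemma polar_avs_av (i j : Fin l) :
    QuadraticMap.polar (Qform l) (avs l i) (av l j) = if i = j then 1 else 0 := by
  by_cases h : i = j
  · subst h; simp [polar_eq, av, avs, Pi.single_apply]
  · simp [polar_eq, av, avs, Pi.single_apply, h]


/-- Fock space -/
abbrev S (l : ℕ) := (Fin l → Bool) → ℂ

def eps (i : Fin l) (T : Fin l → Bool) : ℂ :=
  ∏ j ∈ Finset.univ.filter (fun j => j < i), (if T j then (-1:ℂ) else 1)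

lemma eps_ne_zero (i : Fin l) (T : Fin l → Bool) : eps i T ≠ 0 := by
  refine Finset.prod_ne_zero_iff.2 fun j _ => ?_
  split_ifs <;> norm_num

lemma eps_sq (i : Fin l) (T : Fin l → Bool) : eps i T * eps i T = 1 := by
  rw [eps, ← Finset.prod_mul_distrib]
  refine Finset.prod_eq_one fun j _ => ?_
  split_ifs <;> norm_num

lemma eps_update_not_lt {k i : Fin l} (h : ¬ k < i) (T : Fin l → Bool) (b : Bool) :
    eps i (Function.update T k b) = eps i T := by
  refine Finset.prod_congr rfl fun j hj => ?_
  rw [Finset.mem_filter] at hj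
  have hjk : j ≠ k := fun e => h (e ▸ hj.2)
  rw [Function.update_of_ne hjk]

lemma eps_flip {k i : Fin l} (h : k < i) (T : Fin l → Bool) (b : Bool) (hk : T k ≠ b) :
    eps i (Function.update T k b) = - eps i T := by
  have hk' : k ∈ Finset.univ.filter (fun j => j < i) := by simp [h]
  rw [eps, eps, ← Finset.mul_prod_erase _ _ hk', ← Finset.mul_prod_erase _ _ hk']
  have : ∏ j ∈ (Finset.univ.filter (fun j => j < i)).erase k,
      (if Function.update T k b j then (-1:ℂ) else 1) =
      ∏ j ∈ (Finset.univ.filter (fun j => j < i)).erase k, (if T j then (-1:ℂ) else 1) := by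
    refine Finset.prod_congr rfl fun j hj => ?_
    rw [Function.update_of_ne (Finset.ne_of_mem_erase hj)]
  rw [this, Function.update_self]
  cases b <;> cases hb : T k <;> simp_all <;> ring

def cOp (i : Fin l) : S l →ₗ[ℂ] S l where
  toFun f T := if T i then eps i T * f (Function.update T i false) else 0
  map_add' f g := by funext T; by_cases h : T i <;> simp [h, mul_add]
  map_smul' c f := by funext T; by_cases h : T i <;> simp [h, smul_eq_mul] <;> ring

def dOp (i : Fin l) : S l →ₗ[ℂ] S l where
  toFun f T := if T i then 0 else eps i T * f (Function.update T i true)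
  map_add' f g := by funext T; by_cases h : T i <;> simp [h, mul_add]
  map_smul' c f := by funext T; by_cases h : T i <;> simp [h, smul_eq_mul] <;> ring

lemma cOp_apply (i : Fin l) (f : S l) (T) :
    cOp i f T = if T i then eps i T * f (Function.update T i false) else 0 := rfl

lemma dOp_apply (i : Fin l) (f : S l) (T) :
    dOp i f T = if T i then 0 else eps i T * f (Function.update T i true) := rfl

lemma cc_self (i : Fin l) : cOp (l := l) i ∘ₗ cOp i = 0 := by
  refine LinearMap.ext fun f => funext fun T => ?_
  simp [cOp_apply]

lemma dd_self (i : Fin l) : dOp (l := l) i ∘ₗ dOp i = 0 := by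
  refine LinearMap.ext fun f => funext fun T => ?_
  simp [dOp_apply]

lemma cc_anti {i j : Fin l} (hij : i ≠ j) : cOp i ∘ₗ cOp j = - (cOp j ∘ₗ cOp i) := by
  refine LinearMap.ext fun f => funext fun T => ?_
  simp only [LinearMap.comp_apply, LinearMap.neg_apply, Pi.neg_apply, cOp_apply,
    Function.update_of_ne hij, Function.update_of_ne hij.symm]
  by_cases hi : T i <;> by_cases hj : T j <;> simp [hi, hj]
  rw [Function.update_comm hij]
  rcases lt_or_gt_of_ne hij with h | h
  · rw [eps_update_not_lt (lt_asymm h) T false, eps_flip h T false (by simp [hi])]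
    ring
  · rw [eps_update_not_lt (lt_asymm h) T false, eps_flip h T false (by simp [hj])]
    ring

lemma dd_anti {i j : Fin l} (hij : i ≠ j) : dOp i ∘ₗ dOp j = - (dOp j ∘ₗ dOp i) := by
  refine LinearMap.ext fun f => funext fun T => ?_
  simp only [LinearMap.comp_apply, LinearMap.neg_apply, Pi.neg_apply, dOp_apply,
    Function.update_of_ne hij, Function.update_of_ne hij.symm]
  by_cases hi : T i <;> by_cases hj : T j <;> simp [hi, hj]
  rw [Function.update_comm hij]
  rcases lt_or_gt_of_ne hij with h | h
  · rw [eps_update_not_lt (lt_asymm h) T true, eps_flip h T true (by simp [hi])]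
    ring
  · rw [eps_update_not_lt (lt_asymm h) T true, eps_flip h T true (by simp [hj])]
    ring

lemma cd_anti {i j : Fin l} (hij : i ≠ j) : cOp i ∘ₗ dOp j = - (dOp j ∘ₗ cOp i) := by
  refine LinearMap.ext fun f => funext fun T => ?_
  simp only [LinearMap.comp_apply, LinearMap.neg_apply, Pi.neg_apply, cOp_apply, dOp_apply,
    Function.update_of_ne hij, Function.update_of_ne hij.symm]
  by_cases hi : T i <;> by_cases hj : T j <;> simp [hi, hj]
  rw [Function.update_comm hij]
  rcases lt_or_gt_of_ne hij with h | h
  · rw [eps_update_not_lt (lt_asymm h) T true, eps_flip h T false (by simp [hi])]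
    ring
  · rw [eps_update_not_lt (lt_asymm h) T false, eps_flip h T true (by simp [hj])]
    ring

lemma cd_self (i : Fin l) : cOp i ∘ₗ dOp i + dOp i ∘ₗ cOp i = LinearMap.id := by
  refine LinearMap.ext fun f => funext fun T => ?_
  simp only [LinearMap.comp_apply, LinearMap.add_apply, Pi.add_apply, cOp_apply, dOp_apply,
    LinearMap.id_apply, Function.update_self]
  by_cases hi : T i
  · have h1 : Function.update T i true = T := by
      funext x; by_cases hx : x = i
      · subst hx; simp [hi]
      · simp [Function.update_of_ne hx]
    simp [hi, eps_update_not_lt (lt_irrefl i), h1, ← mul_assoc, eps_sq]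
  · have h1 : Function.update T i false = T := by
      funext x; by_cases hx : x = i
      · subst hx; simp [hi]
      · simp [Function.update_of_ne hx]
    simp [hi, eps_update_not_lt (lt_irrefl i), h1, ← mul_assoc, eps_sq]


open Module in
def Cmap (l : ℕ) : Avec l →ₗ[ℂ] Module.End ℂ (S l) where
  toFun v := (∑ k, v.1 k • cOp k) + (∑ k, v.2 k • dOp k)
  map_add' u v := by
    simp only [Prod.fst_add, Prod.snd_add, Pi.add_apply, add_smul, Finset.sum_add_distrib]
    abel
  map_smul' c v := by
    simp only [Prod.smul_fst, Prod.smul_snd, Pi.smul_apply, smul_eq_mul, mul_smul,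
      RingHom.id_apply, smul_add, Finset.smul_sum]

lemma Qform_apply (l : ℕ) (v : Avec l) : Qform l v = ∑ i, v.1 i * v.2 i := rfl

lemma cc_sum (k m : Fin l) :
    (cOp k : Module.End ℂ (S l)) * cOp m + cOp m * cOp k = 0 := by
  rcases eq_or_ne k m with rfl | h
  · have := cc_self (l := l) k
    simp [Module.End.mul_eq_comp, this]
  · rw [Module.End.mul_eq_comp, cc_anti h, Module.End.mul_eq_comp, neg_add_cancel]

lemma dd_sum (k m : Fin l) :
    (dOp k : Module.End ℂ (S l)) * dOp m + dOp m * dOp k = 0 := by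
  rcases eq_or_ne k m with rfl | h
  · have := dd_self (l := l) k
    simp [Module.End.mul_eq_comp, this]
  · rw [Module.End.mul_eq_comp, dd_anti h, Module.End.mul_eq_comp, neg_add_cancel]

lemma cd_sum (k m : Fin l) :
    (cOp k : Module.End ℂ (S l)) * dOp m + dOp m * cOp k
      = if k = m then (1 : Module.End ℂ (S l)) else 0 := by
  rcases eq_or_ne k m with rfl | h
  · rw [if_pos rfl, Module.End.mul_eq_comp, Module.End.mul_eq_comp]
    exact cd_self k
  · rw [if_neg h, Module.End.mul_eq_comp, cd_anti h, Module.End.mul_eq_comp, neg_add_cancel]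

lemma sum_smul_mul {α : Type*} [Fintype α] (a b : α → ℂ) (A B : α → Module.End ℂ (S l)) :
    ((∑ k, a k • A k) * (∑ m, b m • B m))
      = ∑ k, ∑ m, (a k * b m) • (A k * B m) := by
  rw [Finset.sum_mul_sum]
  exact Finset.sum_congr rfl fun k _ => Finset.sum_congr rfl fun m _ => smul_mul_smul _ _ _ _

lemma Cmap_sq (l : ℕ) (v : Avec l) :
    (Cmap l v) * (Cmap l v) = algebraMap ℂ (Module.End ℂ (S l)) (Qform l v) := by
  set X : Module.End ℂ (S l) := ∑ k, v.1 k • cOp k with hX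
  set Y : Module.End ℂ (S l) := ∑ k, v.2 k • dOp k with hY
  have hC : Cmap l v = X + Y := rfl
  have hXX : X * X = 0 := by
    have e : X * X = ∑ k, ∑ m, (v.1 k * v.1 m) • ((cOp k : Module.End ℂ (S l)) * cOp m) := by
      rw [hX, sum_smul_mul]
    have h2 : X * X + X * X = 0 := by
      nth_rewrite 2 [e]
      rw [Finset.sum_comm (s := Finset.univ) (t := Finset.univ)]
      rw [e, ← Finset.sum_add_distrib]
      refine Finset.sum_eq_zero fun k _ => ?_
      rw [← Finset.sum_add_distrib]
      refine Finset.sum_eq_zero fun m _ => ?_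
      rw [mul_comm (v.1 m) (v.1 k), ← smul_add, cc_sum, smul_zero]
    have h3 : (2:ℂ) • (X * X) = 0 := by rw [two_smul]; exact h2
    rcases smul_eq_zero.mp h3 with h | h
    · norm_num at h
    · exact h
  have hYY : Y * Y = 0 := by
    have e : Y * Y = ∑ k, ∑ m, (v.2 k * v.2 m) • ((dOp k : Module.End ℂ (S l)) * dOp m) := by
      rw [hY, sum_smul_mul]
    have h2 : Y * Y + Y * Y = 0 := by
      nth_rewrite 2 [e]
      rw [Finset.sum_comm (s := Finset.univ) (t := Finset.univ)]
      rw [e, ← Finset.sum_add_distrib]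
      refine Finset.sum_eq_zero fun k _ => ?_
      rw [← Finset.sum_add_distrib]
      refine Finset.sum_eq_zero fun m _ => ?_
      rw [mul_comm (v.2 m) (v.2 k), ← smul_add, dd_sum, smul_zero]
    have h3 : (2:ℂ) • (Y * Y) = 0 := by rw [two_smul]; exact h2
    rcases smul_eq_zero.mp h3 with h | h
    · norm_num at h
    · exact h
  have hXY : X * Y + Y * X = (∑ k, v.1 k * v.2 k) • (1 : Module.End ℂ (S l)) := by
    rw [hX, hY, sum_smul_mul, sum_smul_mul]
    rw [Finset.sum_comm (s := Finset.univ) (t := Finset.univ) (f := fun k m => (v.2 k * v.1 m) • ((dOp k : Module.End ℂ (S l)) * cOp m))]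
    rw [← Finset.sum_add_distrib]
    rw [Finset.sum_smul]
    refine Finset.sum_congr rfl fun k _ => ?_
    rw [← Finset.sum_add_distrib]
    rw [Finset.sum_eq_single k]
    · rw [mul_comm (v.2 k) (v.1 k), ← smul_add, cd_sum, if_pos rfl]
    · intro m _ hm
      rw [mul_comm (v.2 m) (v.1 k), ← smul_add, cd_sum, if_neg (Ne.symm hm), smul_zero]
    · intro hk; exact absurd (Finset.mem_univ k) hk
  rw [hC, add_mul, mul_add, mul_add, hXX, hYY, zero_add, add_zero, hXY,
    Algebra.algebraMap_eq_smul_one, Qform_apply]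

def rho (l : ℕ) : CliffordAlgebra (Qform l) →ₐ[ℂ] Module.End ℂ (S l) :=
  CliffordAlgebra.lift (Qform l) ⟨Cmap l, Cmap_sq l⟩

lemma rho_ι (v : Avec l) : rho l (ι (Qform l) v) = Cmap l v := by
  simp [rho]

lemma Cmap_av (i : Fin l) : Cmap l (av l i) = cOp i := by
  simp only [Cmap, av, LinearMap.coe_mk, AddHom.coe_mk]
  simp [Pi.single_apply, ite_smul]

lemma Cmap_avs (i : Fin l) : Cmap l (avs l i) = dOp i := by
  simp only [Cmap, avs, LinearMap.coe_mk, AddHom.coe_mk]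
  simp [Pi.single_apply, ite_smul]

lemma rho_nor (x y : Avec l) :
    rho l (nor l x y) = (2⁻¹ : ℂ) • (Cmap l x * Cmap l y - Cmap l y * Cmap l x) := by
  simp only [nor, map_smul, map_sub, map_mul, rho_ι]

lemma dc_eq (i : Fin l) :
    (dOp i : Module.End ℂ (S l)) * cOp i = 1 - cOp i * dOp i := by
  have h : (cOp i : Module.End ℂ (S l)) * dOp i + dOp i * cOp i = 1 := by
    rw [Module.End.mul_eq_comp, Module.End.mul_eq_comp]
    exact cd_self i
  linear_combination (norm := module) h - (cOp i : Module.End ℂ (S l)) * dOp i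

lemma rho_Hc (i : Fin l) :
    rho l (Hc l i) = cOp i * dOp i - (2⁻¹ : ℂ) • 1 := by
  rw [Hc, rho_nor, Cmap_av, Cmap_avs, dc_eq]
  module

lemma rho_eM {i j : Fin l} (h : i ≠ j) :
    rho l (nor l (av l i) (avs l j)) = cOp i * dOp j := by
  rw [rho_nor, Cmap_av, Cmap_avs]
  have hh : (dOp j : Module.End ℂ (S l)) * cOp i = - (cOp i * dOp j) := by
    rw [Module.End.mul_eq_comp, Module.End.mul_eq_comp, cd_anti h, neg_neg]
  rw [hh]
  module

lemma rho_eP {i j : Fin l} (h : i ≠ j) :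
    rho l (nor l (av l i) (av l j)) = cOp i * cOp j := by
  rw [rho_nor, Cmap_av, Cmap_av]
  have hh : (cOp j : Module.End ℂ (S l)) * cOp i = - (cOp i * cOp j) := by
    rw [Module.End.mul_eq_comp, Module.End.mul_eq_comp, cc_anti h, neg_neg]
  rw [hh]
  module

lemma rho_fP {i j : Fin l} (h : i ≠ j) :
    rho l (nor l (avs l i) (avs l j)) = dOp i * dOp j := by
  rw [rho_nor, Cmap_avs, Cmap_avs]
  have hh : (dOp j : Module.End ℂ (S l)) * dOp i = - (dOp i * dOp j) := by
    rw [Module.End.mul_eq_comp, Module.End.mul_eq_comp, dd_anti h, neg_neg]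
  rw [hh]
  module

/-- Basis vectors of the Fock space. -/
def bvec (T : Fin l → Bool) : S l := Pi.single T 1

lemma bvec_apply (T T1 : Fin l → Bool) : bvec (l := l) T T1 = if T1 = T then 1 else 0 :=
  Pi.single_apply T 1 T1

lemma upd_inv (T1 : Fin l → Bool) (i : Fin l) (c : Bool) :
    Function.update (Function.update T1 i c) i (T1 i) = T1 := by
  rw [Function.update_idem, Function.update_eq_self]

lemma cOp_bvec (i : Fin l) (T : Fin l → Bool) :
    cOp i (bvec T) = if T i then 0 else eps i T • bvec (Function.update T i true) := by
  by_cases hT : T i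
  · rw [if_pos hT]
    funext T1
    rw [cOp_apply, Pi.zero_apply]
    by_cases h1 : T1 i
    · rw [if_pos h1, bvec_apply, if_neg, mul_zero]
      intro e
      rw [← e] at hT; simp at hT
    · rw [if_neg h1]
  · have hTf : T i = false := by simpa using hT
    rw [if_neg hT]
    funext T1
    rw [cOp_apply, Pi.smul_apply, bvec_apply, bvec_apply, smul_eq_mul]
    by_cases h1 : T1 = Function.update T i true
    · subst h1
      have e1 : Function.update T i true i = true := by simp
      have e2 : Function.update (Function.update T i true) i false = T := by
        rw [Function.update_idem, ← hTf, Function.update_eq_self]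
      rw [if_pos e1, if_pos e2, if_pos rfl, eps_update_not_lt (lt_irrefl i)]
    · rw [if_neg h1, mul_zero]
      by_cases h2 : T1 i
      · rw [if_pos h2, if_neg, mul_zero]
        intro e
        apply h1
        have h3 := upd_inv T1 i false
        rw [e, h2] at h3
        exact h3.symm
      · rw [if_neg h2]

lemma dOp_bvec (i : Fin l) (T : Fin l → Bool) :
    dOp i (bvec T) = if T i then eps i T • bvec (Function.update T i false) else 0 := by
  by_cases hT : T i
  · rw [if_pos hT]
    funext T1
    rw [dOp_apply, Pi.smul_apply, bvec_apply, bvec_apply, smul_eq_mul]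
    by_cases h1 : T1 = Function.update T i false
    · subst h1
      have e1 : ¬ (Function.update T i false i = true) := by simp
      have e2 : Function.update (Function.update T i false) i true = T := by
        rw [Function.update_idem, ← hT, Function.update_eq_self]
      rw [if_neg e1, if_pos e2, if_pos rfl, eps_update_not_lt (lt_irrefl i)]
    · rw [if_neg h1, mul_zero]
      by_cases h2 : T1 i
      · rw [if_pos h2]
      · rw [if_neg h2, if_neg, mul_zero]
        intro e
        apply h1
        have h3 := upd_inv T1 i true
        rw [e, (by simpa using h2 : T1 i = false)] at h3
        exact h3.symm
  · rw [if_neg hT]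
    funext T1
    rw [dOp_apply, Pi.zero_apply]
    by_cases h1 : T1 i
    · rw [if_pos h1]
    · rw [if_neg h1, bvec_apply, if_neg, mul_zero]
      intro e
      rw [← e] at hT; simp at hT

lemma iota_anti {x y : Avec l} (h : QuadraticMap.polar (Qform l) x y = 0) :
    ι (Qform l) x * ι (Qform l) y = - (ι (Qform l) y * ι (Qform l) x) := by
  have h2 := CliffordAlgebra.ι_mul_ι_add_swap (Q := Qform l) x y
  rw [h, map_zero] at h2
  exact eq_neg_of_add_eq_zero_left h2

section CommuteLemmas
variable {R : Type*} [Ring R]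

lemma anticomm_mul_right {P Q X : R} (hP : P * X = -(X * P)) (hQ : Q * X = -(X * Q)) :
    (P * Q) * X = X * (P * Q) := by
  rw [mul_assoc, hQ, mul_neg, ← mul_assoc, hP, neg_mul, neg_neg, mul_assoc]

lemma anticomm_mul_mul {P Q X Y : R}
    (hPX : P * X = -(X * P)) (hQX : Q * X = -(X * Q))
    (hPY : P * Y = -(Y * P)) (hQY : Q * Y = -(Y * Q)) :
    (P * Q) * (X * Y) = (X * Y) * (P * Q) := by
  rw [← mul_assoc, anticomm_mul_right hPX hQX, mul_assoc,
    anticomm_mul_right hPY hQY, ← mul_assoc]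

end CommuteLemmas

lemma Hc_comm (i j : Fin l) : ⁅Hc l i, Hc l j⁆ = 0 := by
  rcases eq_or_ne i j with rfl | hij
  · rw [Ring.lie_def, sub_self]
  · have pAC := iota_anti (x := av l i) (y := av l j) (by rw [polar_av_av])
    have pAD := iota_anti (x := av l i) (y := avs l j) (by rw [polar_av_avs, if_neg hij])
    have pBC := iota_anti (x := avs l i) (y := av l j) (by rw [polar_avs_av, if_neg hij])
    have pBD := iota_anti (x := avs l i) (y := avs l j) (by rw [polar_avs_avs])
    have e1 := anticomm_mul_mul pAC pBC pAD pBD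
    have e2 := anticomm_mul_mul pAD pBD pAC pBC
    have e3 := anticomm_mul_mul pBC pAC pBD pAD
    have e4 := anticomm_mul_mul pBD pAD pBC pAC
    have inner : (ι (Qform l) (av l i) * ι (Qform l) (avs l i)
          - ι (Qform l) (avs l i) * ι (Qform l) (av l i))
        * (ι (Qform l) (av l j) * ι (Qform l) (avs l j)
          - ι (Qform l) (avs l j) * ι (Qform l) (av l j))
        = (ι (Qform l) (av l j) * ι (Qform l) (avs l j)
          - ι (Qform l) (avs l j) * ι (Qform l) (av l j))
        * (ι (Qform l) (av l i) * ι (Qform l) (avs l i)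
          - ι (Qform l) (avs l i) * ι (Qform l) (av l i)) := by
      rw [sub_mul, mul_sub, mul_sub, e1, e2, e3, e4, sub_mul, mul_sub, mul_sub]
      abel
    have key : (Hc l i) * (Hc l j) = (Hc l j) * (Hc l i) := by
      rw [Hc, Hc, nor, nor, smul_mul_assoc, mul_smul_comm, smul_mul_assoc, mul_smul_comm, inner]
    rw [Ring.lie_def, key, sub_self]

/-- diagonal sign of `H_i` -/
def sgn (i : Fin l) (T : Fin l → Bool) : ℂ := if T i then 2⁻¹ else -2⁻¹

lemma rho_Hc_pointwise (i : Fin l) (f : S l) (T : Fin l → Bool) :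
    rho l (Hc l i) f T = sgn i T * f T := by
  rw [rho_Hc]
  have hcd : ((cOp i : Module.End ℂ (S l)) * dOp i) f T = if T i then f T else 0 := by
    rw [Module.End.mul_apply, cOp_apply]
    by_cases hT : T i
    · rw [if_pos hT, dOp_apply, if_neg (by simp), eps_update_not_lt (lt_irrefl i)]
      have h2 : Function.update (Function.update T i false) i true = T := by
        rw [Function.update_idem, ← hT, Function.update_eq_self]
      rw [h2, ← mul_assoc, eps_sq, one_mul, if_pos hT]
    · rw [if_neg hT, if_neg hT]
  rw [LinearMap.sub_apply, Pi.sub_apply, hcd, LinearMap.smul_apply, Pi.smul_apply,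
    Module.End.one_apply, smul_eq_mul, sgn]
  by_cases hT : T i
  · rw [if_pos hT, if_pos hT]; ring
  · rw [if_neg hT, if_neg hT]; ring

/-- matrix entry functional -/
def ent (T0 T1 : Fin l → Bool) : CliffordAlgebra (Qform l) →ₗ[ℂ] ℂ :=
  (LinearMap.proj T1).comp ((LinearMap.applyₗ (bvec T0)).comp (rho l).toLinearMap)

lemma ent_apply (T0 T1 : Fin l → Bool) (u : CliffordAlgebra (Qform l)) :
    ent T0 T1 u = rho l u (bvec T0) T1 := rfl

/-- "diagonal" elements -/
def Dg (u : CliffordAlgebra (Qform l)) : Prop :=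
  ∀ T0 T1 : Fin l → Bool, T0 ≠ T1 → ent T0 T1 u = 0

lemma dg_Hc (i : Fin l) : Dg (Hc l i) := by
  intro T0 T1 hne
  rw [ent_apply, rho_Hc_pointwise, bvec_apply, if_neg (Ne.symm hne), mul_zero]

lemma dg_of_mem_h (u : CliffordAlgebra (Qform l))
    (hu : u ∈ Submodule.span ℂ (Set.range (Hc l))) : Dg u := by
  refine Submodule.span_induction ?_ ?_ ?_ ?_ hu
  · rintro x ⟨i, rfl⟩; exact dg_Hc i
  · intro T0 T1 _; simp [ent_apply]
  · intro x y _ _ hx hy T0 T1 hne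
    rw [map_add, hx T0 T1 hne, hy T0 T1 hne, add_zero]
  · intro c x _ hx T0 T1 hne
    rw [map_smul, hx T0 T1 hne, smul_zero]

lemma ent_bracket_Hc (u : CliffordAlgebra (Qform l)) (i : Fin l) (T0 T1 : Fin l → Bool) :
    ent T0 T1 ⁅u, Hc l i⁆ = (sgn i T0 - sgn i T1) * ent T0 T1 u := by
  rw [Ring.lie_def, map_sub, ent_apply, ent_apply, map_mul, map_mul]
  rw [Module.End.mul_apply, Module.End.mul_apply]
  have h1 : rho l (Hc l i) (bvec T0) = sgn i T0 • bvec T0 := by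
    funext T
    rw [rho_Hc_pointwise, Pi.smul_apply, smul_eq_mul, bvec_apply]
    by_cases hT : T = T0
    · subst hT; rw [if_pos rfl]
    · rw [if_neg hT]
      ring
  rw [h1, map_smul, Pi.smul_apply, smul_eq_mul, rho_Hc_pointwise, ent_apply]
  ring

lemma dg_of_norm (u : CliffordAlgebra (Qform l))
    (hu : ∀ v ∈ Submodule.span ℂ (Set.range (Hc l)), ⁅u, v⁆ ∈ Submodule.span ℂ (Set.range (Hc l))) :
    Dg u := by
  intro T0 T1 hne
  have hx : ∃ i, T0 i ≠ T1 i := by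
    by_contra hc
    push_neg at hc
    exact hne (funext hc)
  obtain ⟨i, hi⟩ := hx
  have hb : Dg ⁅u, Hc l i⁆ :=
    dg_of_mem_h _ (hu _ (Submodule.subset_span ⟨i, rfl⟩))
  have := hb T0 T1 hne
  rw [ent_bracket_Hc] at this
  have hs : sgn i T0 - sgn i T1 ≠ 0 := by
    cases h0 : T0 i <;> cases h1 : T1 i
    · rw [h0, h1] at hi; exact absurd rfl hi
    · simp only [sgn, h0, h1, if_true, if_false]
      norm_num
    · simp only [sgn, h0, h1, if_true, if_false]
      norm_num
    · rw [h0, h1] at hi; exact absurd rfl hi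
  exact (mul_eq_zero.mp this).resolve_left hs

lemma ent_diag_Hc (i : Fin l) (T : Fin l → Bool) : ent T T (Hc l i) = sgn i T := by
  rw [ent_apply, rho_Hc_pointwise, bvec_apply, if_pos rfl, mul_one]

def F0 (l : ℕ) : Fin l → Bool := fun _ => false

def F1 (j : Fin l) : Fin l → Bool := Function.update (F0 l) j true

lemma Hc_indep : LinearIndependent ℂ (Hc l) := by
  rw [Fintype.linearIndependent_iff]
  intro g hg j
  have hT : ∀ T, ∑ i, g i * sgn i T = 0 := by
    intro T
    have h2 := congrArg (ent T T) hg
    rw [map_sum, map_zero] at h2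
    rw [← h2]
    refine Finset.sum_congr rfl fun i _ => ?_
    rw [map_smul, ent_diag_Hc, smul_eq_mul]
  have h0 := hT (F0 l)
  have h1 := hT (F1 j)
  have h2 : ∑ i, g i * (sgn i (F1 j) - sgn i (F0 l)) = 0 := by
    calc ∑ i, g i * (sgn i (F1 j) - sgn i (F0 l))
        = ∑ i, (g i * sgn i (F1 j) - g i * sgn i (F0 l)) := by
          exact Finset.sum_congr rfl fun i _ => mul_sub _ _ _
      _ = (∑ i, g i * sgn i (F1 j)) - ∑ i, g i * sgn i (F0 l) := Finset.sum_sub_distrib _ _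
      _ = 0 := by rw [h0, h1, sub_zero]
  rw [Finset.sum_eq_single j] at h2
  · have hj1 : sgn j (F1 j) = 2⁻¹ := by rw [sgn, F1, Function.update_self, if_pos rfl]
    have hj0 : sgn j (F0 l) = -2⁻¹ := by rw [sgn]; rfl
    rw [hj1, hj0] at h2
    have : g j * 1 = 0 := by rw [← h2]; norm_num
    simpa using this
  · intro i _ hij
    have : sgn i (F1 j) = sgn i (F0 l) := by
      rw [sgn, sgn, F1, Function.update_of_ne hij]
    rw [this, sub_self, mul_zero]
  · intro hj; exact absurd (Finset.mem_univ j) hj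

/-- enumeration of basis vectors of `Avec` -/
def bv (l : ℕ) : (Fin l ⊕ Fin l) → Avec l := Sum.elim (av l) (avs l)

def co (x : Avec l) : (Fin l ⊕ Fin l) → ℂ := Sum.elim x.1 x.2

def pso (l : ℕ) : (Fin l ⊕ Fin l) → ℕ := Sum.elim Fin.val (fun i => l + i)

lemma pso_inj : Function.Injective (pso l) := by
  rintro (a | a) (b | b) h <;> simp only [pso, Sum.elim_inl, Sum.elim_inr] at h
  · exact congrArg Sum.inl (Fin.ext h)
  · exact absurd h (by have := a.isLt; omega)
  · exact absurd h (by have := b.isLt; omega)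
  · exact congrArg Sum.inr (Fin.ext (by omega))

abbrev PIdx (l : ℕ) := {pq : (Fin l ⊕ Fin l) × (Fin l ⊕ Fin l) // pso l pq.1 < pso l pq.2}

def gen (p : PIdx l) : CliffordAlgebra (Qform l) := nor l (bv l p.1.1) (bv l p.1.2)

def genB : PIdx l ⊕ (Fin l ⊕ Fin l) → CliffordAlgebra (Qform l) :=
  Sum.elim gen (fun k => ι (Qform l) (bv l k))

lemma nor_swap (x y : Avec l) : nor l x y = - nor l y x := by
  rw [nor, nor, ← smul_neg, neg_sub]

lemma nor_self (x : Avec l) : nor l x x = 0 := by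
  rw [nor, sub_self, smul_zero]

def norBil (l : ℕ) : Avec l →ₗ[ℂ] Avec l →ₗ[ℂ] CliffordAlgebra (Qform l) :=
  LinearMap.mk₂ ℂ (nor l)
    (fun x x' y => by simp only [nor, map_add, add_mul, mul_add]; module)
    (fun c x y => by simp only [nor, map_smul, smul_mul_assoc, mul_smul_comm]; module)
    (fun x y y' => by simp only [nor, map_add, add_mul, mul_add]; module)
    (fun c x y => by simp only [nor, map_smul, smul_mul_assoc, mul_smul_comm]; module)

lemma avec_eq_sum (x : Avec l) : x = ∑ p, co x p • bv l p := by
  rw [Fintype.sum_sum_type]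
  refine Prod.ext ?_ ?_ <;> funext t
  · simp only [Prod.fst_sum, Prod.snd_sum, co, bv, av, avs, Sum.elim_inl, Sum.elim_inr,
      Prod.smul_fst, Prod.smul_snd, Prod.fst_add, Prod.snd_add]
    simp [Pi.single_apply, Finset.sum_apply, mul_comm]
  · simp only [Prod.fst_sum, Prod.snd_sum, co, bv, av, avs, Sum.elim_inl, Sum.elim_inr,
      Prod.smul_fst, Prod.smul_snd, Prod.fst_add, Prod.snd_add]
    simp [Pi.single_apply, Finset.sum_apply, mul_comm]

lemma nor_expand (x y : Avec l) :
    nor l x y = ∑ p, ∑ q, (co x p * co y q) • nor l (bv l p) (bv l q) := by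
  have hx : nor l x y = norBil l x y := by rw [norBil]; simp
  rw [hx]
  nth_rewrite 1 [avec_eq_sum x]
  nth_rewrite 1 [avec_eq_sum y]
  simp_rw [LinearMap.map_sum₂, map_sum, LinearMap.map_smul₂, map_smul, smul_smul]
  simp [norBil]

lemma mem_span_gen (x y : Avec l) :
    nor l x y ∈ Submodule.span ℂ (Set.range (gen (l := l))) := by
  rw [nor_expand]
  refine Submodule.sum_mem _ fun p _ => Submodule.sum_mem _ fun q _ =>
    Submodule.smul_mem _ _ ?_
  rcases lt_trichotomy (pso l p) (pso l q) with hlt | heq | hgt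
  · exact Submodule.subset_span ⟨⟨(p, q), hlt⟩, rfl⟩
  · rw [pso_inj heq, nor_self]; exact zero_mem _
  · rw [nor_swap]
    exact neg_mem (Submodule.subset_span ⟨⟨(q, p), hgt⟩, rfl⟩)

lemma gD_le_span : gD l ≤ Submodule.span ℂ (Set.range (gen (l := l))) := by
  rw [gD, Submodule.span_le]
  rintro z ⟨x, y, rfl⟩
  exact mem_span_gen x y

lemma gB_le_span : gB l ≤ Submodule.span ℂ (Set.range (genB (l := l))) := by
  rw [gB]
  refine sup_le ?_ ?_
  · refine le_trans gD_le_span (Submodule.span_mono ?_)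
    rintro z ⟨p, rfl⟩
    exact ⟨Sum.inl p, rfl⟩
  · rintro z ⟨v, rfl⟩
    rw [avec_eq_sum v, map_sum]
    refine Submodule.sum_mem _ fun p _ => ?_
    rw [map_smul]
    exact Submodule.smul_mem _ _ (Submodule.subset_span ⟨Sum.inr p, rfl⟩)

lemma ccb {i j : Fin l} (hij : i ≠ j) (T : Fin l → Bool) :
    (cOp i * cOp j : Module.End ℂ (S l)) (bvec T) =
      if T j then 0 else if T i then 0 else
        (eps j T * eps i (Function.update T j true)) •
          bvec (Function.update (Function.update T j true) i true) := by
  rw [Module.End.mul_apply, cOp_bvec]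
  by_cases hj : T j
  · rw [if_pos hj, if_pos hj, map_zero]
  · rw [if_neg hj, if_neg hj, map_smul, cOp_bvec,
      Function.update_of_ne hij]
    by_cases hi : T i
    · rw [if_pos hi, if_pos hi, smul_zero]
    · rw [if_neg hi, if_neg hi, smul_smul]

lemma cdb {i j : Fin l} (hij : i ≠ j) (T : Fin l → Bool) :
    (cOp i * dOp j : Module.End ℂ (S l)) (bvec T) =
      if T j then (if T i then 0 else
        (eps j T * eps i (Function.update T j false)) •
          bvec (Function.update (Function.update T j false) i true)) else 0 := by
  rw [Module.End.mul_apply, dOp_bvec]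
  by_cases hj : T j
  · rw [if_pos hj, if_pos hj, map_smul, cOp_bvec, Function.update_of_ne hij]
    by_cases hi : T i
    · rw [if_pos hi, if_pos hi, smul_zero]
    · rw [if_neg hi, if_neg hi, smul_smul]
  · rw [if_neg hj, if_neg hj, map_zero]

lemma ddb {i j : Fin l} (hij : i ≠ j) (T : Fin l → Bool) :
    (dOp i * dOp j : Module.End ℂ (S l)) (bvec T) =
      if T j then (if T i then
        (eps j T * eps i (Function.update T j false)) •
          bvec (Function.update (Function.update T j false) i false) else 0) else 0 := by
  rw [Module.End.mul_apply, dOp_bvec]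
  by_cases hj : T j
  · rw [if_pos hj, if_pos hj, map_smul, dOp_bvec, Function.update_of_ne hij]
    by_cases hi : T i
    · rw [if_pos hi, if_pos hi, smul_smul]
    · rw [if_neg hi, if_neg hi, smul_zero]
  · rw [if_neg hj, if_neg hj, map_zero]

/- ### vanishing lemmas -/

lemma entV_cc {i j : Fin l} (hij : i ≠ j) {T0 T1 : Fin l → Bool}
    (h : T0 j = false → T0 i = false →
      T1 ≠ Function.update (Function.update T0 j true) i true) :
    ent T0 T1 (nor l (av l i) (av l j)) = 0 := by
  rw [ent_apply, rho_eP hij, ccb hij]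
  by_cases hj : T0 j
  · rw [if_pos hj]; rfl
  · by_cases hi : T0 i
    · rw [if_neg hj, if_pos hi]; rfl
    · rw [if_neg hj, if_neg hi, Pi.smul_apply, bvec_apply,
        if_neg (h (by simpa using hj) (by simpa using hi)), smul_zero]

lemma entV_cd {i j : Fin l} (hij : i ≠ j) {T0 T1 : Fin l → Bool}
    (h : T0 j = true → T0 i = false →
      T1 ≠ Function.update (Function.update T0 j false) i true) :
    ent T0 T1 (nor l (av l i) (avs l j)) = 0 := by
  rw [ent_apply, rho_eM hij, cdb hij]
  by_cases hj : T0 j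
  · by_cases hi : T0 i
    · rw [if_pos hj, if_pos hi]; rfl
    · rw [if_pos hj, if_neg hi, Pi.smul_apply, bvec_apply,
        if_neg (h hj (by simpa using hi)), smul_zero]
  · rw [if_neg hj]; rfl

lemma entV_dd {i j : Fin l} (hij : i ≠ j) {T0 T1 : Fin l → Bool}
    (h : T0 j = true → T0 i = true →
      T1 ≠ Function.update (Function.update T0 j false) i false) :
    ent T0 T1 (nor l (avs l i) (avs l j)) = 0 := by
  rw [ent_apply, rho_fP hij, ddb hij]
  by_cases hj : T0 j
  · by_cases hi : T0 i
    · rw [if_pos hj, if_pos hi, Pi.smul_apply, bvec_apply,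
        if_neg (h hj hi), smul_zero]
    · rw [if_pos hj, if_neg hi]; rfl
  · rw [if_neg hj]; rfl

lemma entV_cartan {i : Fin l} {T0 T1 : Fin l → Bool} (h : T0 ≠ T1) :
    ent T0 T1 (nor l (av l i) (avs l i)) = 0 :=
  dg_Hc i T0 T1 h

lemma entV_c {k : Fin l} {T0 T1 : Fin l → Bool}
    (h : T0 k = false → T1 ≠ Function.update T0 k true) :
    ent T0 T1 (ι (Qform l) (av l k)) = 0 := by
  rw [ent_apply, rho_ι, Cmap_av, cOp_bvec]
  by_cases hk : T0 k
  · rw [if_pos hk]; rfl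
  · rw [if_neg hk, Pi.smul_apply, bvec_apply, if_neg (h (by simpa using hk)), smul_zero]

lemma entV_d {k : Fin l} {T0 T1 : Fin l → Bool}
    (h : T0 k = true → T1 ≠ Function.update T0 k false) :
    ent T0 T1 (ι (Qform l) (avs l k)) = 0 := by
  rw [ent_apply, rho_ι, Cmap_avs, dOp_bvec]
  by_cases hk : T0 k
  · rw [if_pos hk, Pi.smul_apply, bvec_apply, if_neg (h hk), smul_zero]
  · rw [if_neg hk]; rfl

/- ### value lemmas -/

lemma entN_cc {i j : Fin l} (hij : i ≠ j) {T0 : Fin l → Bool}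
    (hj : T0 j = false) (hi : T0 i = false) :
    ent T0 (Function.update (Function.update T0 j true) i true) (nor l (av l i) (av l j))
      ≠ 0 := by
  rw [ent_apply, rho_eP hij, ccb hij, if_neg (by simp [hj]), if_neg (by simp [hi]),
    Pi.smul_apply, bvec_apply, if_pos rfl, smul_eq_mul, mul_one]
  exact mul_ne_zero (eps_ne_zero _ _) (eps_ne_zero _ _)

lemma entN_cd {i j : Fin l} (hij : i ≠ j) {T0 : Fin l → Bool}
    (hj : T0 j = true) (hi : T0 i = false) :
    ent T0 (Function.update (Function.update T0 j false) i true) (nor l (av l i) (avs l j))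
      ≠ 0 := by
  rw [ent_apply, rho_eM hij, cdb hij, if_pos hj, if_neg (by simp [hi]),
    Pi.smul_apply, bvec_apply, if_pos rfl, smul_eq_mul, mul_one]
  exact mul_ne_zero (eps_ne_zero _ _) (eps_ne_zero _ _)

lemma entN_dd {i j : Fin l} (hij : i ≠ j) {T0 : Fin l → Bool}
    (hj : T0 j = true) (hi : T0 i = true) :
    ent T0 (Function.update (Function.update T0 j false) i false) (nor l (avs l i) (avs l j))
      ≠ 0 := by
  rw [ent_apply, rho_fP hij, ddb hij, if_pos hj, if_pos hi,
    Pi.smul_apply, bvec_apply, if_pos rfl, smul_eq_mul, mul_one]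
  exact mul_ne_zero (eps_ne_zero _ _) (eps_ne_zero _ _)

lemma entN_c {k : Fin l} {T0 : Fin l → Bool} (hk : T0 k = false) :
    ent T0 (Function.update T0 k true) (ι (Qform l) (av l k)) ≠ 0 := by
  rw [ent_apply, rho_ι, Cmap_av, cOp_bvec, if_neg (by simp [hk]),
    Pi.smul_apply, bvec_apply, if_pos rfl, smul_eq_mul, mul_one]
  exact eps_ne_zero _ _

lemma entN_d {k : Fin l} {T0 : Fin l → Bool} (hk : T0 k = true) :
    ent T0 (Function.update T0 k false) (ι (Qform l) (avs l k)) ≠ 0 := by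
  rw [ent_apply, rho_ι, Cmap_avs, dOp_bvec, if_pos hk,
    Pi.smul_apply, bvec_apply, if_pos rfl, smul_eq_mul, mul_one]
  exact eps_ne_zero _ _

def F2 (i j : Fin l) : Fin l → Bool := Function.update (F1 j) i true

lemma F1_true_iff (k x : Fin l) : F1 k x = true ↔ x = k := by
  simp [F1, Function.update_apply, F0]

lemma F2_true_iff (i j x : Fin l) : F2 i j x = true ↔ (x = i ∨ x = j) := by
  simp [F2, F1, Function.update_apply, F0]

lemma F2_at_fst (i j : Fin l) : F2 i j i = true := (F2_true_iff i j i).mpr (Or.inl rfl)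

lemma F2_at_snd (i j : Fin l) : F2 i j j = true := (F2_true_iff i j j).mpr (Or.inr rfl)

lemma F1_at_self (k : Fin l) : F1 k k = true := (F1_true_iff k k).mpr rfl

lemma F0_false (x : Fin l) : F0 l x = false := rfl

lemma F1_at_ne {k x : Fin l} (h : x ≠ k) : F1 k x = false := by
  simp [F1, Function.update_of_ne h, F0]

lemma F2_at_ne {i j x : Fin l} (hi : x ≠ i) (hj : x ≠ j) : F2 i j x = false := by
  simp [F2, F1, Function.update_of_ne hi, Function.update_of_ne hj, F0]

lemma pair_order {a b i j : Fin l} (hab : a < b) (hij : i < j)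
    (ha : a = i ∨ a = j) (hb : b = i ∨ b = j) : a = i ∧ b = j := by
  rcases ha with rfl | rfl
  · rcases hb with rfl | rfl
    · exact absurd hab (lt_irrefl _)
    · exact ⟨rfl, rfl⟩
  · rcases hb with rfl | rfl
    · exact absurd hij (lt_asymm hab)
    · exact absurd hab (lt_irrefl _)

lemma F2_eq_lt {a b i j : Fin l} (hab : a < b) (hij : i < j) (e : F2 a b = F2 i j) :
    a = i ∧ b = j := by
  have ha : a = i ∨ a = j := (F2_true_iff i j a).mp (by rw [← e]; exact F2_at_fst a b)
  have hb : b = i ∨ b = j := (F2_true_iff i j b).mp (by rw [← e]; exact F2_at_snd a b)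
  exact pair_order hab hij ha hb

lemma F2_ne_F1 {i j : Fin l} (hij : i ≠ j) (k : Fin l) : F2 i j ≠ F1 k := by
  intro e
  have h1 : i = k := (F1_true_iff k i).mp (by rw [← e]; exact F2_at_fst i j)
  have h2 : j = k := (F1_true_iff k j).mp (by rw [← e]; exact F2_at_snd i j)
  exact hij (h1.trans h2.symm)

lemma F1_del (k : Fin l) : Function.update (F1 k) k false = F0 l := by
  rw [F1, Function.update_idem]
  exact Function.update_eq_self k (F0 l)

lemma F2_del {i j : Fin l} (hij : i ≠ j) :
    Function.update (Function.update (F2 i j) j false) i false = F0 l := by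
  funext x
  rcases eq_or_ne x i with rfl | hxi
  · rw [Function.update_self]; rfl
  · rw [Function.update_of_ne hxi]
    rcases eq_or_ne x j with rfl | hxj
    · rw [Function.update_self]; rfl
    · rw [Function.update_of_ne hxj, F2_at_ne hxi hxj]; rfl

lemma key_mem (u : CliffordAlgebra (Qform l)) (hu : u ∈ gB l) (hd : Dg u) :
    u ∈ Submodule.span ℂ (Set.range (Hc l)) := by
  obtain ⟨c, hc⟩ := (Submodule.mem_span_range_iff_exists_fun ℂ).mp (gB_le_span hu)
  have main : ∀ q : PIdx l ⊕ (Fin l ⊕ Fin l), ∀ T0 T1 : Fin l → Bool, T0 ≠ T1 →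
      (∀ q' : PIdx l ⊕ (Fin l ⊕ Fin l), q' ≠ q → ent T0 T1 (genB q') = 0) →
      ent T0 T1 (genB q) ≠ 0 → c q = 0 := by
    intro q T0 T1 hne hvan hval
    have h0 : ent T0 T1 u = 0 := hd T0 T1 hne
    rw [← hc, map_sum, Finset.sum_eq_single q] at h0
    · rw [map_smul, smul_eq_mul] at h0
      exact (mul_eq_zero.mp h0).resolve_right hval
    · intro b _ hb
      rw [map_smul, hvan b hb, smul_zero]
    · intro hq; exact absurd (Finset.mem_univ q) hq
  rw [← hc]
  refine Submodule.sum_mem _ fun q _ => ?_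
  rcases q with ⟨⟨i1 | i1, j1 | j1⟩, hp⟩ | (k | k)
  · -- (inl, inl) : e_{εi+εj} type
    have hij : i1 < j1 := by
      simp only [pso, Sum.elim_inl] at hp
      exact Fin.lt_def.mpr hp
    have hne0 : i1 ≠ j1 := Fin.ne_of_lt hij
    have hneT : F0 l ≠ F2 i1 j1 := by
      intro e
      have h3 := congrFun e i1
      rw [F2_at_fst] at h3
      simp [F0] at h3
    have hvan : ∀ q' : PIdx l ⊕ (Fin l ⊕ Fin l),
        q' ≠ Sum.inl ⟨(Sum.inl i1, Sum.inl j1), hp⟩ →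
        ent (F0 l) (F2 i1 j1) (genB q') = 0 := by
      intro q' hq'
      rcases q' with ⟨⟨a | a, b | b⟩, hp'⟩ | (k | k)
      · have hab : a < b := by
          simp only [pso, Sum.elim_inl] at hp'
          exact Fin.lt_def.mpr hp'
        refine entV_cc (Fin.ne_of_lt hab) (fun h1 h2 heq => ?_)
        have hEq : F2 a b = F2 i1 j1 := heq.symm
        obtain ⟨rfl, rfl⟩ := F2_eq_lt hab hij hEq
        exact hq' rfl
      · rcases eq_or_ne a b with rfl | hab
        · exact entV_cartan hneT
        · refine entV_cd hab (fun h1 _ _ => ?_)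
          simp [F0] at h1
      · exact absurd hp' (by simp only [pso, Sum.elim_inl, Sum.elim_inr]; have := b.isLt; omega)
      · have hab : a < b := by
          simp only [pso, Sum.elim_inr] at hp'
          exact Fin.lt_def.mpr (by omega)
        refine entV_dd (Fin.ne_of_lt hab) (fun h1 _ _ => ?_)
        simp [F0] at h1
      · refine entV_c (fun h1 heq => ?_)
        exact F2_ne_F1 hne0 k heq
      · refine entV_d (fun h1 _ => ?_)
        simp [F0] at h1
    have hc0 : c (Sum.inl ⟨(Sum.inl i1, Sum.inl j1), hp⟩) = 0 :=
      main _ (F0 l) (F2 i1 j1) hneT hvan (entN_cc hne0 rfl rfl)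
    rw [hc0, zero_smul]; exact Submodule.zero_mem _
  · -- (inl, inr) : Cartan or e_{εi-εj} type
    rcases eq_or_ne i1 j1 with rfl | hcar
    · exact Submodule.smul_mem _ _ (Submodule.subset_span ⟨i1, rfl⟩)
    · have hneT : F1 j1 ≠ F1 i1 := by
        intro e
        have h3 := congrFun e j1
        rw [F1_at_self, F1_at_ne (Ne.symm hcar)] at h3
        simp at h3
      have hvan : ∀ q' : PIdx l ⊕ (Fin l ⊕ Fin l),
          q' ≠ Sum.inl ⟨(Sum.inl i1, Sum.inr j1), hp⟩ →
          ent (F1 j1) (F1 i1) (genB q') = 0 := by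
        intro q' hq'
        rcases q' with ⟨⟨a | a, b | b⟩, hp'⟩ | (k | k)
        · have hab : a < b := by
            simp only [pso, Sum.elim_inl] at hp'
            exact Fin.lt_def.mpr hp'
          refine entV_cc (Fin.ne_of_lt hab) (fun h1 h2 heq => ?_)
          have haj : j1 ≠ a := fun e => by rw [← e, F1_at_self] at h2; simp at h2
          have hbj : j1 ≠ b := fun e => by rw [← e, F1_at_self] at h1; simp at h1
          have h3 := congrFun heq j1
          rw [F1_at_ne (Ne.symm hcar), Function.update_of_ne haj,
            Function.update_of_ne hbj, F1_at_self] at h3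
          simp at h3
        · rcases eq_or_ne a b with rfl | hab
          · exact entV_cartan hneT
          · refine entV_cd hab (fun h1 h2 heq => ?_)
            obtain rfl := (F1_true_iff j1 b).mp h1
            rw [F1_del] at heq
            have h4 := congrFun heq a
            rw [Function.update_self] at h4
            obtain rfl := (F1_true_iff i1 a).mp h4
            exact hq' rfl
        · exact absurd hp' (by simp only [pso, Sum.elim_inl, Sum.elim_inr]; have := b.isLt; omega)
        · have hab : a < b := by
            simp only [pso, Sum.elim_inr] at hp'
            exact Fin.lt_def.mpr (by omega)
          refine entV_dd (Fin.ne_of_lt hab) (fun h1 h2 _ => ?_)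
          have e1 := (F1_true_iff j1 b).mp h1
          have e2 := (F1_true_iff j1 a).mp h2
          exact absurd (e2.trans e1.symm) (Fin.ne_of_lt hab)
        · refine entV_c (fun h1 heq => ?_)
          have hkj : j1 ≠ k := fun e => by rw [← e, F1_at_self] at h1; simp at h1
          have h3 := congrFun heq j1
          rw [F1_at_ne (Ne.symm hcar), Function.update_of_ne hkj, F1_at_self] at h3
          simp at h3
        · refine entV_d (fun h1 heq => ?_)
          obtain rfl := (F1_true_iff j1 k).mp h1
          rw [F1_del] at heq
          have h3 := congrFun heq i1
          rw [F1_at_self] at h3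
          simp [F0] at h3
      have e2 : F1 i1 = Function.update (Function.update (F1 j1) j1 false) i1 true := by
        rw [F1_del]; rfl
      have hval : ent (F1 j1) (F1 i1)
          (genB (Sum.inl ⟨(Sum.inl i1, Sum.inr j1), hp⟩)) ≠ 0 := by
        rw [e2]
        exact entN_cd hcar (F1_at_self j1) (F1_at_ne hcar)
      have hc0 : c (Sum.inl ⟨(Sum.inl i1, Sum.inr j1), hp⟩) = 0 :=
        main _ (F1 j1) (F1 i1) hneT hvan hval
      rw [hc0, zero_smul]; exact Submodule.zero_mem _
  · -- (inr, inl) : impossible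
    exact absurd hp (by simp only [pso, Sum.elim_inl, Sum.elim_inr]; have := j1.isLt; omega)
  · -- (inr, inr) : f_{εi+εj} type
    have hij : i1 < j1 := by
      simp only [pso, Sum.elim_inr] at hp
      exact Fin.lt_def.mpr (by omega)
    have hne0 : i1 ≠ j1 := Fin.ne_of_lt hij
    have hneT : F2 i1 j1 ≠ F0 l := by
      intro e
      have h3 := congrFun e i1
      rw [F2_at_fst] at h3
      simp [F0] at h3
    have hvan : ∀ q' : PIdx l ⊕ (Fin l ⊕ Fin l),
        q' ≠ Sum.inl ⟨(Sum.inr i1, Sum.inr j1), hp⟩ →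
        ent (F2 i1 j1) (F0 l) (genB q') = 0 := by
      intro q' hq'
      rcases q' with ⟨⟨a | a, b | b⟩, hp'⟩ | (k | k)
      · have hab : a < b := by
          simp only [pso, Sum.elim_inl] at hp'
          exact Fin.lt_def.mpr hp'
        refine entV_cc (Fin.ne_of_lt hab) (fun h1 h2 heq => ?_)
        have hai : i1 ≠ a := fun e => by rw [← e, F2_at_fst] at h2; simp at h2
        have hbi : i1 ≠ b := fun e => by rw [← e, F2_at_fst] at h1; simp at h1
        have h3 := congrFun heq i1
        rw [Function.update_of_ne hai, Function.update_of_ne hbi, F2_at_fst] at h3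
        simp [F0] at h3
      · rcases eq_or_ne a b with rfl | hab
        · exact entV_cartan hneT
        · refine entV_cd hab (fun h1 h2 heq => ?_)
          have h3 := congrFun heq a
          rw [Function.update_self] at h3
          simp [F0] at h3
      · exact absurd hp' (by simp only [pso, Sum.elim_inl, Sum.elim_inr]; have := b.isLt; omega)
      · have hab : a < b := by
          simp only [pso, Sum.elim_inr] at hp'
          exact Fin.lt_def.mpr (by omega)
        refine entV_dd (Fin.ne_of_lt hab) (fun h1 h2 heq => ?_)
        have hbm := (F2_true_iff i1 j1 b).mp h1
        have ham := (F2_true_iff i1 j1 a).mp h2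
        obtain ⟨rfl, rfl⟩ := pair_order hab hij ham hbm
        exact hq' rfl
      · refine entV_c (fun h1 heq => ?_)
        have hki : i1 ≠ k := fun e => by rw [← e, F2_at_fst] at h1; simp at h1
        have h3 := congrFun heq i1
        rw [Function.update_of_ne hki, F2_at_fst] at h3
        simp [F0] at h3
      · refine entV_d (fun h1 heq => ?_)
        rcases (F2_true_iff i1 j1 k).mp h1 with rfl | rfl
        · have h3 := congrFun heq j1
          rw [Function.update_of_ne (Ne.symm hne0), F2_at_snd] at h3
          simp [F0] at h3
        · have h3 := congrFun heq i1
          rw [Function.update_of_ne hne0, F2_at_fst] at h3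
          simp [F0] at h3
    have hval : ent (F2 i1 j1) (F0 l)
        (genB (Sum.inl ⟨(Sum.inr i1, Sum.inr j1), hp⟩)) ≠ 0 := by
      rw [← F2_del hne0]
      exact entN_dd hne0 (F2_at_snd i1 j1) (F2_at_fst i1 j1)
    have hc0 : c (Sum.inl ⟨(Sum.inr i1, Sum.inr j1), hp⟩) = 0 :=
      main _ (F2 i1 j1) (F0 l) hneT hvan hval
    rw [hc0, zero_smul]; exact Submodule.zero_mem _
  · -- vector a_k
    have hneT : F0 l ≠ F1 k := by
      intro e
      have h3 := congrFun e k
      rw [F1_at_self] at h3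
      simp [F0] at h3
    have hvan : ∀ q' : PIdx l ⊕ (Fin l ⊕ Fin l), q' ≠ Sum.inr (Sum.inl k) →
        ent (F0 l) (F1 k) (genB q') = 0 := by
      intro q' hq'
      rcases q' with ⟨⟨a | a, b | b⟩, hp'⟩ | (k' | k')
      · have hab : a < b := by
          simp only [pso, Sum.elim_inl] at hp'
          exact Fin.lt_def.mpr hp'
        refine entV_cc (Fin.ne_of_lt hab) (fun h1 h2 heq => ?_)
        exact F2_ne_F1 (Fin.ne_of_lt hab) k heq.symm
      · rcases eq_or_ne a b with rfl | hab
        · exact entV_cartan hneT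
        · refine entV_cd hab (fun h1 _ _ => ?_)
          simp [F0] at h1
      · exact absurd hp' (by simp only [pso, Sum.elim_inl, Sum.elim_inr]; have := b.isLt; omega)
      · have hab : a < b := by
          simp only [pso, Sum.elim_inr] at hp'
          exact Fin.lt_def.mpr (by omega)
        refine entV_dd (Fin.ne_of_lt hab) (fun h1 _ _ => ?_)
        simp [F0] at h1
      · have hkk : k' ≠ k := fun e => hq' (by rw [e])
        refine entV_c (fun h1 heq => ?_)
        have h3 := congrFun heq k
        rw [F1_at_self, Function.update_of_ne (Ne.symm hkk)] at h3
        simp [F0] at h3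
      · refine entV_d (fun h1 _ => ?_)
        simp [F0] at h1
    have hc0 : c (Sum.inr (Sum.inl k)) = 0 :=
      main _ (F0 l) (F1 k) hneT hvan (entN_c rfl)
    rw [hc0, zero_smul]; exact Submodule.zero_mem _
  · -- vector a_k^*
    have hneT : F1 k ≠ F0 l := by
      intro e
      have h3 := congrFun e k
      rw [F1_at_self] at h3
      simp [F0] at h3
    have hvan : ∀ q' : PIdx l ⊕ (Fin l ⊕ Fin l), q' ≠ Sum.inr (Sum.inr k) →
        ent (F1 k) (F0 l) (genB q') = 0 := by
      intro q' hq'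
      rcases q' with ⟨⟨a | a, b | b⟩, hp'⟩ | (k' | k')
      · have hab : a < b := by
          simp only [pso, Sum.elim_inl] at hp'
          exact Fin.lt_def.mpr hp'
        refine entV_cc (Fin.ne_of_lt hab) (fun h1 h2 heq => ?_)
        have hka : k ≠ a := fun e => by rw [← e, F1_at_self] at h2; simp at h2
        have hkb : k ≠ b := fun e => by rw [← e, F1_at_self] at h1; simp at h1
        have h3 := congrFun heq k
        rw [Function.update_of_ne hka, Function.update_of_ne hkb, F1_at_self] at h3
        simp [F0] at h3
      · rcases eq_or_ne a b with rfl | hab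
        · exact entV_cartan hneT
        · refine entV_cd hab (fun h1 h2 heq => ?_)
          have h3 := congrFun heq a
          rw [Function.update_self] at h3
          simp [F0] at h3
      · exact absurd hp' (by simp only [pso, Sum.elim_inl, Sum.elim_inr]; have := b.isLt; omega)
      · have hab : a < b := by
          simp only [pso, Sum.elim_inr] at hp'
          exact Fin.lt_def.mpr (by omega)
        refine entV_dd (Fin.ne_of_lt hab) (fun h1 h2 _ => ?_)
        have e1 := (F1_true_iff k b).mp h1
        have e2 := (F1_true_iff k a).mp h2
        exact absurd (e2.trans e1.symm) (Fin.ne_of_lt hab)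
      · refine entV_c (fun h1 heq => ?_)
        have hkk : k ≠ k' := fun e => by rw [← e, F1_at_self] at h1; simp at h1
        have h3 := congrFun heq k
        rw [Function.update_of_ne hkk, F1_at_self] at h3
        simp [F0] at h3
      · refine entV_d (fun h1 heq => ?_)
        obtain rfl := (F1_true_iff k k').mp h1
        exact hq' rfl
    have hval : ent (F1 k) (F0 l) (genB (Sum.inr (Sum.inr k))) ≠ 0 := by
      rw [← F1_del k]
      exact entN_d (F1_at_self k)
    have hc0 : c (Sum.inr (Sum.inr k)) = 0 :=
      main _ (F1 k) (F0 l) hneT hvan hval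
    rw [hc0, zero_smul]; exact Submodule.zero_mem _

lemma abelian_h : ∀ u ∈ Submodule.span ℂ (Set.range (Hc l)),
    ∀ v ∈ Submodule.span ℂ (Set.range (Hc l)), ⁅u, v⁆ = 0 := by
  have inner : ∀ i : Fin l, ∀ v ∈ Submodule.span ℂ (Set.range (Hc l)), ⁅Hc l i, v⁆ = 0 := by
    intro i v hv
    refine Submodule.span_induction ?_ ?_ ?_ ?_ hv
    · rintro x ⟨j, rfl⟩; exact Hc_comm i j
    · rw [Ring.lie_def, mul_zero, zero_mul, sub_zero]
    · intro x y _ _ hx hy; rw [Ring.lie_def] at hx hy ⊢; rw [mul_add, add_mul, add_sub_add_comm, hx, hy, add_zero]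
    · intro c x _ hx; rw [Ring.lie_def] at hx ⊢; rw [mul_smul_comm, smul_mul_assoc, ← smul_sub, hx, smul_zero]
  intro u hu v hv
  refine Submodule.span_induction ?_ ?_ ?_ ?_ hu
  · rintro x ⟨i, rfl⟩; exact inner i v hv
  · rw [Ring.lie_def, zero_mul, mul_zero, sub_zero]
  · intro x y _ _ hx hy; rw [Ring.lie_def] at hx hy ⊢; rw [add_mul, mul_add, add_sub_add_comm, hx, hy, add_zero]
  · intro c x _ hx; rw [Ring.lie_def] at hx ⊢; rw [smul_mul_assoc, mul_smul_comm, ← smul_sub, hx, smul_zero]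

end CartanAux

open CartanAux

/-- `h = span_ℂ{H_1, …, H_l}` is an `l`-dimensional abelian subalgebra of `g_{D_l}` which is
self-normalizing in `g_{D_l}` (hence a Cartan subalgebra of `g_{D_l}`), and `h` is likewise
self-normalizing in `g_{B_l}`, hence a Cartan subalgebra of `g_{B_l}`. -/

theorem cartan_subalgebra_H (l : ℕ) (hl : 4 ≤ l)
    (h : Submodule ℂ (CliffordAlgebra (Qform l)))
    (hdef : h = Submodule.span ℂ (Set.range (Hc l))) :
    h ≤ gD l ∧
    (∀ u ∈ h, ∀ v ∈ h, ⁅u, v⁆ = 0) ∧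
    Module.finrank ℂ h = l ∧
    (∀ u ∈ gD l, (∀ v ∈ h, ⁅u, v⁆ ∈ h) → u ∈ h) ∧
    (∀ u ∈ gB l, (∀ v ∈ h, ⁅u, v⁆ ∈ h) → u ∈ h) := by
  subst hdef
  have hDB : gD l ≤ gB l := le_sup_left
  refine ⟨?_, abelian_h, ?_, ?_, ?_⟩
  · rw [Submodule.span_le]
    rintro z ⟨i, rfl⟩
    exact Submodule.subset_span ⟨av l i, avs l i, rfl⟩
  · rw [finrank_span_eq_card Hc_indep, Fintype.card_fin]
  · intro u hu hnorm
    exact key_mem u (hDB hu) (dg_of_norm u hnorm)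
  · intro u hu hnorm
    exact key_mem u hu (dg_of_norm u hnorm)

end
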